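/- Let (L, ∨, ∧) be a finite distributive lattice with a probability measure μ on L satisfying the log-supermodularity condition μ(ℓ₁ ∧ ℓ₂) μ(ℓ₁ ∨ ℓ₂) ≥ μ(ℓ₁) μ(ℓ₂) for all ℓ₁, ℓ₂ ∈ L. If h₁ and h₂ are both monotone increasing real-valued functions on L with respect to the lattice partial order, then Σ_ℓ h₁(ℓ)h₂(ℓ)μ(ℓ) ≥ (Σ_ℓ h₁(ℓ)μ(ℓ))(Σ_ℓ h₂(ℓ)μ(ℓ)). -/

import Mathlib

/-!
The covariance of `h₁` and `h₂` under `μ` does not change when constants are subtracted from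
them, so both may be assumed nonnegative. For nonnegative increasing functions the inequality is
Mathlib's `fkg`, a consequence of the Ahlswede–Daykin four functions theorem.
-/

open Finset

section

variable {α β : Type*} [Fintype α] [CommRing β]

def unnormalizedCovariance (μ f g : α → β) : β :=
  (∑ a, μ a) * (∑ a, μ a * (f a * g a)) - (∑ a, μ a * f a) * ∑ a, μ a * g a

lemma unnormalizedCovariance_sub_const (μ f g : α → β) (c d : β) :
    unnormalizedCovariance μ (fun a ↦ f a - c) (fun a ↦ g a - d) =
      unnormalizedCovariance μ f g := by
  have expand : ∀ a, μ a * ((f a - c) * (g a - d)) =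
      μ a * (f a * g a) - d * (μ a * f a) - c * (μ a * g a) + c * d * μ a := fun a ↦ by ring
  simp only [unnormalizedCovariance, expand]
  simp only [mul_sub, sum_add_distrib, sum_sub_distrib, ← mul_sum, ← sum_mul]
  ring

variable [DistribLattice α] [LinearOrder β] [IsStrictOrderedRing β]

theorem unnormalizedCovariance_nonneg_of_monotone {μ f g : α → β} (hμ₀ : 0 ≤ μ)
    (hμ : ∀ a b, μ a * μ b ≤ μ (a ⊓ b) * μ (a ⊔ b)) (hf : Monotone f) (hg : Monotone g) :
    0 ≤ unnormalizedCovariance μ f g := by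
  obtain ⟨c, hc⟩ := (Set.finite_range f).bddBelow
  obtain ⟨d, hd⟩ := (Set.finite_range g).bddBelow
  rw [← unnormalizedCovariance_sub_const μ f g c d, unnormalizedCovariance, sub_nonneg]
  exact fkg _ _ μ hμ₀ (fun a ↦ sub_nonneg.2 (hc ⟨a, rfl⟩)) (fun a ↦ sub_nonneg.2 (hd ⟨a, rfl⟩))
    (fun a b hab ↦ sub_le_sub_right (hf hab) c) (fun a b hab ↦ sub_le_sub_right (hg hab) d) hμ

end

/-- FKG inequality: on a finite distributive lattice `L` with a probability measure `μ`
satisfying `μ(ℓ₁ ∧ ℓ₂) μ(ℓ₁ ∨ ℓ₂) ≥ μ(ℓ₁) μ(ℓ₂)`, any two increasing functions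
`h₁, h₂` are positively correlated. -/
theorem fkg_inequality
    {L : Type*} [Fintype L] [DistribLattice L]
    (μ : L → ℝ)
    (hμ_nonneg : ∀ ℓ, 0 ≤ μ ℓ)
    (hμ_prob : ∑ ℓ : L, μ ℓ = 1)
    (hμ_logsupermod : ∀ ℓ₁ ℓ₂ : L, μ (ℓ₁ ⊓ ℓ₂) * μ (ℓ₁ ⊔ ℓ₂) ≥ μ ℓ₁ * μ ℓ₂)
    (h₁ h₂ : L → ℝ)
    (hh₁ : Monotone h₁) (hh₂ : Monotone h₂) :
    ∑ ℓ : L, h₁ ℓ * h₂ ℓ * μ ℓ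
      ≥ (∑ ℓ : L, h₁ ℓ * μ ℓ) * (∑ ℓ : L, h₂ ℓ * μ ℓ) := by
  have h := unnormalizedCovariance_nonneg_of_monotone hμ_nonneg hμ_logsupermod hh₁ hh₂
  simp only [unnormalizedCovariance, hμ_prob, one_mul, sub_nonneg] at h
  simpa only [mul_comm (μ _), ge_iff_le] using h
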